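/- Let (Ω, 𝓕, P) be a probability space, let r, θ : Ω → ℝ be bounded measurable random variables, and let H > 0 and H' ∈ ℝ be real constants. Define the bounded linear operators on L²(Ω; ℝ): 𝒬ξ = H'ξ − H'E[ξ] + 2rHξ − HE[rξ] − HrE[ξ]; 𝒮ξ = Hθ(ξ − E[ξ]) with adjoint 𝒮*η = H(θη − E[θη]); and ℛη = Hη, so that ℛ⁻¹η = H⁻¹η. Then for every ξ ∈ L²(Ω; ℝ), E[((𝒬 − 𝒮*ℛ⁻¹𝒮)ξ)ξ] = E[(H' + H(2r − θ²))(ξ − E[ξ])²] + 2H · E[r(ξ − E[ξ])] · E[ξ]. In particular, if r is almost surely equal to a constant, then E[((𝒬 − 𝒮*ℛ⁻¹𝒮)ξ)ξ] = E[(H' + H(2r − θ²))(ξ − E[ξ])²]. -/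

import Mathlib

open MeasureTheory

/-- Pointwise action of `𝒬ξ = H'ξ − H'E[ξ] + 2rHξ − HE[rξ] − HrE[ξ]`. -/
noncomputable def Qop {Ω : Type*} [MeasurableSpace Ω] (P : MeasureTheory.Measure Ω)
    (r : Ω → ℝ) (H H' : ℝ) (ξ : Ω → ℝ) (ω : Ω) : ℝ :=
  H' * ξ ω - H' * (∫ ω', ξ ω' ∂P) + 2 * r ω * H * ξ ω -
    H * (∫ ω', r ω' * ξ ω' ∂P) - H * r ω * (∫ ω', ξ ω' ∂P)

/-- Pointwise action of `𝒮ξ = Hθ(ξ − E[ξ])`. -/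
noncomputable def Sop {Ω : Type*} [MeasurableSpace Ω] (P : MeasureTheory.Measure Ω)
    (θ : Ω → ℝ) (H : ℝ) (ξ : Ω → ℝ) (ω : Ω) : ℝ :=
  H * θ ω * (ξ ω - ∫ ω', ξ ω' ∂P)

/-- Pointwise action of `𝒮*η = H(θη − E[θη])`. -/
noncomputable def SstarOp {Ω : Type*} [MeasurableSpace Ω] (P : MeasureTheory.Measure Ω)
    (θ : Ω → ℝ) (H : ℝ) (η : Ω → ℝ) (ω : Ω) : ℝ :=
  H * (θ ω * η ω - ∫ ω', θ ω' * η ω' ∂P)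

/-- Pointwise action of `ℛ⁻¹η = H⁻¹η`. -/
noncomputable def RinvOp (H : ℝ) (η : Ω → ℝ) (ω : Ω) : ℝ := H⁻¹ * η ω

/-!
Since `ℛ⁻¹` cancels the factor `H` of `𝒮`, the Schur term is
`𝒮*ℛ⁻¹𝒮ξ = H(θ²ζ − E[θ²ζ])` with `ζ = ξ − E[ξ]`. Writing `ξ = ζ + E[ξ]`, the integrand
`((𝒬 − 𝒮*ℛ⁻¹𝒮)ξ)ξ` is pointwise `(H' + H(2r − θ²))ζ² + 2H E[ξ] rζ` plus a linear combination
of the centred variables `rξ − E[rξ]`, `θ²ζ − E[θ²ζ]` and `ζ`, whose expectations vanish.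
When `r` is a.s. constant, `E[rζ] = 0` as well.
-/

section

variable {Ω : Type*} [MeasurableSpace Ω] {P : Measure Ω}

theorem memLp_top_of_abs_le {g : Ω → ℝ} (hg : Measurable g) (hgb : ∃ C, ∀ ω, |g ω| ≤ C) :
    MemLp g ⊤ P :=
  let ⟨C, hC⟩ := hgb
  memLp_top_of_bound hg.aestronglyMeasurable C (ae_of_all _ hC)

theorem integral_sub_integral_eq_zero [IsProbabilityMeasure P] {f : Ω → ℝ}
    (hf : Integrable f P) : ∫ ω, (f ω - ∫ ω', f ω' ∂P) ∂P = 0 := by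
  rw [integral_sub hf (integrable_const _), integral_const, probReal_univ, one_smul, sub_self]

theorem integral_mul_sub_integral_eq_zero_of_ae_eq_const [IsProbabilityMeasure P]
    {r ξ : Ω → ℝ} {c : ℝ} (hr : ∀ᵐ ω ∂P, r ω = c) (hξ : Integrable ξ P) :
    ∫ ω, r ω * (ξ ω - ∫ ω', ξ ω' ∂P) ∂P = 0 := by
  rw [integral_congr_ae (hr.mono fun ω hω => by rw [hω]), integral_const_mul,
    integral_sub_integral_eq_zero hξ, mul_zero]

theorem SstarOp_RinvOp_Sop_eq (P : Measure Ω) (θ : Ω → ℝ) {H : ℝ} (hH : H ≠ 0) (ξ : Ω → ℝ) :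
    SstarOp P θ H (RinvOp H (Sop P θ H ξ)) = fun ω =>
      H * (θ ω ^ 2 * (ξ ω - ∫ ω', ξ ω' ∂P) - ∫ ω', θ ω' ^ 2 * (ξ ω' - ∫ ω'', ξ ω'' ∂P) ∂P) := by
  have h : ∀ ω, θ ω * RinvOp H (Sop P θ H ξ) ω = θ ω ^ 2 * (ξ ω - ∫ ω', ξ ω' ∂P) := fun ω => by
    simp only [RinvOp, Sop]; field_simp
  ext ω
  simp only [SstarOp, h]

theorem integral_Qop_sub_schur_mul_self [IsProbabilityMeasure P] {r θ ξ : Ω → ℝ} {H H' : ℝ}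
    (hr : MemLp r ⊤ P) (hθ : MemLp θ ⊤ P) (hH : H ≠ 0) (hξ : MemLp ξ 2 P) :
    ∫ ω, (Qop P r H H' ξ ω - SstarOp P θ H (RinvOp H (Sop P θ H ξ)) ω) * ξ ω ∂P =
      (∫ ω, (H' + H * (2 * r ω - θ ω ^ 2)) * (ξ ω - ∫ ω', ξ ω' ∂P) ^ 2 ∂P) +
        2 * H * (∫ ω, r ω * (ξ ω - ∫ ω', ξ ω' ∂P) ∂P) * (∫ ω', ξ ω' ∂P) := by
  set m := ∫ ω, ξ ω ∂P
  have hθ2 : MemLp (fun ω => θ ω ^ 2) ⊤ P := by simpa only [sq, Pi.mul_def] using hθ.mul hθ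
  have hw : MemLp (fun ω => H' + H * (2 * r ω - θ ω ^ 2)) ⊤ P :=
    (memLp_const H').add (((hr.const_mul 2).sub hθ2).const_mul H)
  have hξ1 : Integrable ξ P := hξ.integrable one_le_two
  have hζ : Integrable (fun ω => ξ ω - m) P := hξ1.sub (integrable_const m)
  have hwζ2 : Integrable (fun ω => (H' + H * (2 * r ω - θ ω ^ 2)) * (ξ ω - m) ^ 2) P :=
    (hξ.sub (memLp_const m)).integrable_sq.mul_of_top_right hw
  have hrζ : Integrable (fun ω => r ω * (ξ ω - m)) P := hζ.mul_of_top_right hr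
  have hrξ : Integrable (fun ω => r ω * ξ ω) P := hξ1.mul_of_top_right hr
  have hθ2ζ : Integrable (fun ω => θ ω ^ 2 * (ξ ω - m)) P := hζ.mul_of_top_right hθ2
  set a := ∫ ω, r ω * ξ ω ∂P
  set b := ∫ ω, θ ω ^ 2 * (ξ ω - m) ∂P
  have ha : ∫ ω, (r ω * ξ ω - a) ∂P = 0 := integral_sub_integral_eq_zero hrξ
  have hb : ∫ ω, (θ ω ^ 2 * (ξ ω - m) - b) ∂P = 0 := integral_sub_integral_eq_zero hθ2ζ
  have hm : ∫ ω, (ξ ω - m) ∂P = 0 := integral_sub_integral_eq_zero hξ1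
  have hpt : ∀ ω, (Qop P r H H' ξ ω - SstarOp P θ H (RinvOp H (Sop P θ H ξ)) ω) * ξ ω =
      (H' + H * (2 * r ω - θ ω ^ 2)) * (ξ ω - m) ^ 2 + 2 * H * m * (r ω * (ξ ω - m))
        + H * m * (r ω * ξ ω - a) - H * m * (θ ω ^ 2 * (ξ ω - m) - b)
        + (H * b - H * a + H' * m) * (ξ ω - m) := by
    intro ω
    rw [SstarOp_RinvOp_Sop_eq P θ hH]
    simp only [Qop]
    ring
  simp_rw [hpt]
  rw [integral_add (by fun_prop) (by fun_prop), integral_sub (by fun_prop) (by fun_prop),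
    integral_add (by fun_prop) (by fun_prop), integral_add (by fun_prop) (by fun_prop)]
  simp only [integral_const_mul, ha, hb, hm]
  ring

end

/-- With `𝒬ξ = H'ξ − H'E[ξ] + 2rHξ − HE[rξ] − HrE[ξ]`,
`𝒮ξ = Hθ(ξ − E[ξ])`, `𝒮*η = H(θη − E[θη])` and `ℛ⁻¹η = H⁻¹η`, for every `ξ ∈ L²(Ω; ℝ)`,
`E[((𝒬 − 𝒮*ℛ⁻¹𝒮)ξ)ξ] = E[(H' + H(2r − θ²))(ξ − E[ξ])²] + 2H · E[r(ξ − E[ξ])] · E[ξ]`;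
in particular, if `r` is a.s. constant, the last term vanishes. -/
theorem schur_complement_quadratic_form_meanVariance
    {Ω : Type*} [MeasurableSpace Ω] (P : Measure Ω) [IsProbabilityMeasure P]
    (r θ : Ω → ℝ) (hrm : Measurable r) (hθm : Measurable θ)
    (hrb : ∃ C : ℝ, ∀ ω, |r ω| ≤ C) (hθb : ∃ C : ℝ, ∀ ω, |θ ω| ≤ C)
    (H H' : ℝ) (hH : 0 < H) :
    ∀ ξ : Ω → ℝ, MemLp ξ 2 P →
      (∫ ω, (Qop P r H H' ξ ω - SstarOp P θ H (RinvOp H (Sop P θ H ξ)) ω) * ξ ω ∂P =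
        (∫ ω, (H' + H * (2 * r ω - θ ω ^ 2)) * (ξ ω - ∫ ω', ξ ω' ∂P) ^ 2 ∂P) +
          2 * H * (∫ ω, r ω * (ξ ω - ∫ ω', ξ ω' ∂P) ∂P) * (∫ ω', ξ ω' ∂P)) ∧
      ((∃ c : ℝ, ∀ᵐ ω ∂P, r ω = c) →
        ∫ ω, (Qop P r H H' ξ ω - SstarOp P θ H (RinvOp H (Sop P θ H ξ)) ω) * ξ ω ∂P =
          ∫ ω, (H' + H * (2 * r ω - θ ω ^ 2)) * (ξ ω - ∫ ω', ξ ω' ∂P) ^ 2 ∂P) := by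
  intro ξ hξ
  have hident := integral_Qop_sub_schur_mul_self (H' := H') (memLp_top_of_abs_le hrm hrb)
    (memLp_top_of_abs_le hθm hθb) hH.ne' hξ
  refine ⟨hident, fun ⟨c, hc⟩ => ?_⟩
  rw [hident, integral_mul_sub_integral_eq_zero_of_ae_eq_const hc (hξ.integrable one_le_two)]
  ring
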